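/- Let Y = (ℓ₂, |||·|||) be the renorming of ℓ₂ described in the context. For each n ∈ ℕ, set k := 32n − 16 and define x(n) := (1 − 1/n)e₁ + (1/(4n))·Σ_{i=2}^{k+1} e_i ∈ Y and x*(n) := (1 − 1/n)e₁* + (1/(4n))·Σ_{i=2}^{k+1} e_i* ∈ Y*. Then |||x(n)||| = ‖x(n)‖_{ℓ₂} = 1 and x*(n)(x(n)) = 1, the dual norm of x*(n) in Y* equals 1 and equals ‖x*(n)‖_{ℓ₂}, and moreover |||e₁ − x(n)||| → 0 and the dual norm of e₁* − x*(n) tends to 0 as n → ∞. -/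

import Mathlib

open NormedSpace Topology Filter

noncomputable section

/-- The real sequence space ℓ₂. -/
abbrev H : Type := lp (fun _ : ℕ => ℝ) 2

/-- The standard unit vector basis of ℓ₂ (`e 0` plays the role of `e₁`, and `e n` for
`n ≥ 1` the roles of `e_n`, `n ≥ 2`, of the paper). -/
def e (n : ℕ) : H := lp.single 2 n (1 : ℝ)

/-- The unit ball of the auxiliary renorming of ℓ₂: the closed convex hull of
`B_{ℓ₂} ∪ {±(e₁ + e_n) : n ≥ 2}`. -/
def ballB : Set H :=
  closure (convexHull ℝ (Metric.closedBall (0 : H) 1 ∪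
    {z : H | ∃ n : ℕ, 1 ≤ n ∧ (z = e 0 + e n ∨ z = -(e 0 + e n))}))

/-- The norm `‖·‖` whose unit ball is `ballB`, i.e. the Minkowski gauge of `ballB`. -/
def normB (x : H) : ℝ := gauge ballB x

/-- The norm `|||x||| = max (‖x‖, sup_{n ≥ 2} |x₁ − 2 x_n|)` of the renorming `Y` of ℓ₂. -/
def tripleNorm (x : H) : ℝ :=
  max (normB x) (sSup {r : ℝ | ∃ n : ℕ, 1 ≤ n ∧ r = |x 0 - 2 * x n|})

/-- The canonical pairing of ℓ₂ with itself. -/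
def pairing (f y : H) : ℝ := ∑' i : ℕ, f i * y i

/-- The dual norm of `tripleNorm`, computed on ℓ₂ via the canonical pairing. -/
def dualTripleNorm (f : H) : ℝ :=
  sSup ((fun y => pairing f y) '' {y : H | tripleNorm y ≤ 1})

/-- `x(n) = (1 − 1/n) e₁ + (1/(4n)) Σ_{i=2}^{k+1} e_i` with `k = 32n − 16`
(in 0-based indexing, the sum runs over `e i` for `1 ≤ i ≤ 32n − 16`). -/
def xx (n : ℕ) : H :=
  (1 - 1 / (n : ℝ)) • e 0 + (1 / (4 * (n : ℝ))) • ∑ i ∈ Finset.Icc 1 (32 * n - 16), e i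

/-- `x*(n) = (1 − 1/n) e₁* + (1/(4n)) Σ_{i=2}^{k+1} e_i*`, realized in ℓ₂ via the
canonical pairing; it is given by the same formula as `x(n)`. -/
def xs (n : ℕ) : H := xx n

/-! The unit ball `B` of `‖·‖` contains the Euclidean unit ball and lies in the Euclidean ball
of radius `√2`, so `‖·‖` is squeezed between `‖·‖₂ / √2` and `‖·‖₂`, and a dual norm is at most
`√2` times the Euclidean one. A vector `f` with `‖f‖₂ ≤ 1` and `|f₁ + f_m| ≤ 1` for all `m ≥ 2`
pairs to at most `1` with every generator of `B`, hence with `B`. For `x(n)` both conditions hold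
and `⟨x(n), x(n)⟩ = 1`, which pins all its norms to `1`, while `‖e₁ − x(n)‖₂² = 2/n` makes both
differences tend to `0`. -/

open RealInnerProductSpace Metric Finset

lemma le_gauge_of_forall_le {E : Type*} [AddCommGroup E] [Module ℝ E] {s : Set E}
    (hs : Absorbent ℝ s) (ℓ : E →ₗ[ℝ] ℝ) (hℓ : ∀ y ∈ s, ℓ y ≤ 1) (x : E) :
    ℓ x ≤ gauge s x := by
  refine forall_gt_iff_le.mp fun a ha => ?_
  obtain ⟨b, hb, hba, y, hy, rfl⟩ := exists_lt_of_gauge_lt hs ha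
  rw [map_smul, smul_eq_mul]
  exact (mul_le_of_le_one_right hb.le (hℓ y hy)).trans_lt hba

lemma e_apply (i j : ℕ) : e i j = if j = i then 1 else 0 := by
  simp [e, lp.single_apply, Pi.single_apply]

lemma inner_e_right (f : H) (i : ℕ) : ⟪f, e i⟫ = f i := by
  simp [e, lp.inner_single_right]

lemma pairing_eq_inner (f y : H) : pairing f y = ⟪f, y⟫ := by
  rw [pairing, lp.inner_eq_tsum]
  simp [RCLike.inner_apply, mul_comm]

def headBlock (a b : ℝ) (t : Finset ℕ) : H := a • e 0 + b • ∑ i ∈ t, e i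

section HeadBlock

variable (a b : ℝ) {t : Finset ℕ}

lemma headBlock_apply (m : ℕ) :
    headBlock a b t m = (if m = 0 then a else 0) + (if m ∈ t then b else 0) := by
  simp only [headBlock, lp.coeFn_add, lp.coeFn_smul, lp.coeFn_sum, Pi.add_apply, Pi.smul_apply,
    Finset.sum_apply, e_apply, smul_eq_mul]
  simp

lemma headBlock_apply_zero (h0 : 0 ∉ t) : headBlock a b t 0 = a := by
  simp [headBlock_apply, h0]

lemma headBlock_apply_of_ne_zero {m : ℕ} (hm : m ≠ 0) :
    headBlock a b t m = if m ∈ t then b else 0 := by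
  simp [headBlock_apply, hm]

lemma norm_sq_headBlock (h0 : 0 ∉ t) : ‖headBlock a b t‖ ^ 2 = a ^ 2 + #t * b ^ 2 := by
  have hsum : ∑ i ∈ t, headBlock a b t i = ∑ _i ∈ t, b := Finset.sum_congr rfl fun i hi => by
    rw [headBlock_apply_of_ne_zero a b (ne_of_mem_of_not_mem hi h0), if_pos hi]
  rw [← real_inner_self_eq_norm_sq]
  nth_rw 2 [headBlock]
  rw [inner_add_right, real_inner_smul_right, real_inner_smul_right, inner_sum]
  simp only [inner_e_right]
  rw [hsum, Finset.sum_const, nsmul_eq_mul, headBlock_apply_zero a b h0]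
  ring

end HeadBlock

lemma ballB_subset {s : Set H} (hconv : Convex ℝ s) (hclosed : IsClosed s)
    (hball : closedBall 0 1 ⊆ s) (hgen : ∀ m, 1 ≤ m → e 0 + e m ∈ s ∧ -(e 0 + e m) ∈ s) :
    ballB ⊆ s := by
  refine closure_minimal (convexHull_min (Set.union_subset hball ?_) hconv) hclosed
  rintro z ⟨m, hm, rfl | rfl⟩
  exacts [(hgen m hm).1, (hgen m hm).2]

lemma closedBall_subset_ballB : closedBall (0 : H) 1 ⊆ ballB :=
  (Set.subset_union_left.trans (subset_convexHull ℝ _)).trans subset_closure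

lemma convex_ballB : Convex ℝ ballB := (convex_convexHull ℝ _).closure

lemma isClosed_ballB : IsClosed ballB := isClosed_closure

lemma ballB_mem_nhds_zero : ballB ∈ 𝓝 (0 : H) :=
  mem_of_superset (closedBall_mem_nhds 0 one_pos) closedBall_subset_ballB

lemma normB_le_one_iff {y : H} : normB y ≤ 1 ↔ y ∈ ballB := by
  rw [normB, gauge_le_one_iff_mem_closure convex_ballB ballB_mem_nhds_zero,
    isClosed_ballB.closure_eq]

lemma normB_le_norm (x : H) : normB x ≤ ‖x‖ := by
  have := gauge_mono (absorbent_nhds_zero (closedBall_mem_nhds (0 : H) one_pos))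
    closedBall_subset_ballB x
  rwa [gauge_closedBall zero_le_one, div_one] at this

lemma norm_e_zero_add_e {m : ℕ} (hm : 1 ≤ m) : ‖e 0 + e m‖ = √2 := by
  have h := norm_sq_headBlock 1 1 (t := {m}) (by simp; omega)
  simp only [headBlock, one_smul, Finset.sum_singleton, Finset.card_singleton] at h
  rw [← Real.sqrt_sq (norm_nonneg _), h]
  norm_num

lemma ballB_subset_closedBall : ballB ⊆ closedBall 0 √2 := by
  refine ballB_subset (convex_closedBall _ _) isClosed_closedBall
    (closedBall_subset_closedBall (by simp [Real.one_le_sqrt])) fun m hm => ?_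
  simp only [mem_closedBall_zero_iff, norm_neg, norm_e_zero_add_e hm, le_refl, and_self]

lemma inner_le_of_mem_ballB (f : H) {C : ℝ} (hf : ‖f‖ ≤ C)
    (hpm : ∀ m, 1 ≤ m → |f 0 + f m| ≤ C) {y : H} (hy : y ∈ ballB) : ⟪f, y⟫ ≤ C := by
  have hlin : IsLinearMap ℝ (fun y : H => ⟪f, y⟫) :=
    ⟨fun _ _ => inner_add_right _ _ _, fun _ _ => real_inner_smul_right _ _ _⟩
  refine ballB_subset (convex_halfSpace_le hlin C)
    (isClosed_le (continuous_const.inner continuous_id) continuous_const) (fun z hz => ?_)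
    (fun m hm => ?_) hy
  · have hz : ‖z‖ ≤ 1 := by simpa using hz
    calc ⟪f, z⟫ ≤ ‖f‖ * ‖z‖ := real_inner_le_norm f z
      _ ≤ C := by nlinarith [norm_nonneg f, norm_nonneg z]
  · have hval : ⟪f, e 0 + e m⟫ = f 0 + f m := by
      rw [inner_add_right, inner_e_right, inner_e_right]
    have := abs_le.mp (hpm m hm)
    simp only [Set.mem_ofPred_eq, inner_neg_right, hval]
    constructor <;> linarith

lemma inner_le_sqrt_two_mul_norm (f : H) {y : H} (hy : y ∈ ballB) : ⟪f, y⟫ ≤ √2 * ‖f‖ := by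
  have hy' : ‖y‖ ≤ √2 := by simpa using ballB_subset_closedBall hy
  calc ⟪f, y⟫ ≤ ‖f‖ * ‖y‖ := real_inner_le_norm f y
    _ ≤ √2 * ‖f‖ := by nlinarith [norm_nonneg f]

lemma inner_le_normB {f : H} (hf : ∀ y ∈ ballB, ⟪f, y⟫ ≤ 1) (x : H) : ⟪f, x⟫ ≤ normB x :=
  le_gauge_of_forall_le (absorbent_nhds_zero ballB_mem_nhds_zero) (innerₛₗ ℝ f) hf x

lemma normB_le_tripleNorm (x : H) : normB x ≤ tripleNorm x := le_max_left _ _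

lemma tripleNorm_nonneg (x : H) : 0 ≤ tripleNorm x :=
  (gauge_nonneg x).trans (normB_le_tripleNorm x)

lemma tripleNorm_le_max_norm {x : H} {c : ℝ} (hc : 0 ≤ c)
    (h : ∀ m, 1 ≤ m → |x 0 - 2 * x m| ≤ c) : tripleNorm x ≤ max ‖x‖ c := by
  refine max_le_max (normB_le_norm x) (Real.sSup_le ?_ hc)
  rintro _ ⟨m, hm, rfl⟩
  exact h m hm

lemma tripleNorm_zero : tripleNorm 0 = 0 :=
  le_antisymm (by simpa using tripleNorm_le_max_norm le_rfl (x := 0) (by simp))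
    (tripleNorm_nonneg 0)

lemma mem_ballB_of_tripleNorm_le_one {y : H} (hy : tripleNorm y ≤ 1) : y ∈ ballB :=
  normB_le_one_iff.mp ((normB_le_tripleNorm y).trans hy)

lemma dualTripleNorm_le {f : H} {C : ℝ} (hC : 0 ≤ C) (hf : ∀ y ∈ ballB, ⟪f, y⟫ ≤ C) :
    dualTripleNorm f ≤ C := by
  refine Real.sSup_le ?_ hC
  rintro _ ⟨y, hy, rfl⟩
  exact (pairing_eq_inner f y).trans_le <| hf y (mem_ballB_of_tripleNorm_le_one hy)

lemma pairing_le_dualTripleNorm (f : H) {y : H} (hy : tripleNorm y ≤ 1) :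
    pairing f y ≤ dualTripleNorm f := by
  refine le_csSup ⟨√2 * ‖f‖, ?_⟩ ⟨y, hy, rfl⟩
  rintro _ ⟨z, hz, rfl⟩
  exact (pairing_eq_inner f z).trans_le <|
    inner_le_sqrt_two_mul_norm f (mem_ballB_of_tripleNorm_le_one hz)

lemma dualTripleNorm_nonneg (f : H) : 0 ≤ dualTripleNorm f := by
  simpa [pairing] using pairing_le_dualTripleNorm f (tripleNorm_zero.trans_le zero_le_one)

section Xx

variable {n : ℕ}

lemma xx_eq_headBlock (n : ℕ) :
    xx n = headBlock (1 - 1 / n) (1 / (4 * n)) (Icc 1 (32 * n - 16)) := rfl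

lemma e_zero_sub_xx_eq_headBlock (n : ℕ) :
    e 0 - xx n = headBlock (1 / n) (-(1 / (4 * n))) (Icc 1 (32 * n - 16)) := by
  rw [xx, headBlock]
  module

lemma cast_card_Icc (hn : 1 ≤ n) : (#(Icc 1 (32 * n - 16)) : ℝ) = 32 * n - 16 := by
  rw [Nat.card_Icc, Nat.add_sub_cancel, Nat.cast_sub (by omega)]
  push_cast
  ring

lemma norm_xx (hn : 1 ≤ n) : ‖xx n‖ = 1 := by
  have hn' : (n : ℝ) ≠ 0 := by positivity
  rw [← Real.sqrt_sq (norm_nonneg _), xx_eq_headBlock, norm_sq_headBlock _ _ (by simp),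
    cast_card_Icc hn, ← Real.sqrt_one]
  congr 1
  field_simp
  ring

lemma norm_e_zero_sub_xx (hn : 1 ≤ n) : ‖e 0 - xx n‖ = √(2 / n) := by
  have hn' : (n : ℝ) ≠ 0 := by positivity
  rw [← Real.sqrt_sq (norm_nonneg _), e_zero_sub_xx_eq_headBlock,
    norm_sq_headBlock _ _ (by simp), cast_card_Icc hn]
  congr 1
  field_simp
  ring

lemma abs_xx_apply_le_one (hn : 1 ≤ n) {m : ℕ} (hm : m ≠ 0) :
    |xx n 0 + xx n m| ≤ 1 ∧ |xx n 0 - 2 * xx n m| ≤ 1 := by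
  have hinv : 1 / (n : ℝ) ≤ 1 := div_le_one_of_le₀ (by exact_mod_cast hn) (by positivity)
  have hquarter : 1 / (4 * (n : ℝ)) = 1 / n / 4 := by ring
  have hpos : 0 < 1 / (n : ℝ) := by positivity
  rw [xx_eq_headBlock, headBlock_apply_zero _ _ (by simp), headBlock_apply_of_ne_zero _ _ hm,
    abs_le, abs_le]
  split_ifs <;> refine ⟨⟨?_, ?_⟩, ?_, ?_⟩ <;> linarith

lemma abs_e_zero_sub_xx_apply_le (hn : 1 ≤ n) {m : ℕ} (hm : m ≠ 0) :
    |(e 0 - xx n) 0 - 2 * (e 0 - xx n) m| ≤ 3 / 2 / n := by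
  have hquarter : 1 / (4 * (n : ℝ)) = 1 / n / 4 := by ring
  have hbound : 3 / 2 / (n : ℝ) = 3 / 2 * (1 / n) := by ring
  have hpos : 0 < 1 / (n : ℝ) := by positivity
  rw [e_zero_sub_xx_eq_headBlock, headBlock_apply_zero _ _ (by simp),
    headBlock_apply_of_ne_zero _ _ hm, abs_le]
  split_ifs <;> constructor <;> linarith

lemma inner_xx_le_one (hn : 1 ≤ n) {y : H} (hy : y ∈ ballB) : ⟪xx n, y⟫ ≤ 1 :=
  inner_le_of_mem_ballB _ (norm_xx hn).le (fun _ hm => (abs_xx_apply_le_one hn (by omega)).1) hy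

lemma tripleNorm_xx (hn : 1 ≤ n) : tripleNorm (xx n) = 1 := by
  refine le_antisymm ?_ ?_
  · have := tripleNorm_le_max_norm zero_le_one fun _ hm => (abs_xx_apply_le_one hn (by omega)).2
    rwa [norm_xx hn, max_self] at this
  · calc 1 = ‖xx n‖ ^ 2 := by rw [norm_xx hn, one_pow]
      _ = ⟪xx n, xx n⟫ := (real_inner_self_eq_norm_sq _).symm
      _ ≤ normB (xx n) := inner_le_normB (fun _ hy => inner_xx_le_one hn hy) _
      _ ≤ tripleNorm (xx n) := normB_le_tripleNorm _

lemma pairing_xs_xx (hn : 1 ≤ n) : pairing (xs n) (xx n) = 1 := by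
  rw [xs, pairing_eq_inner, real_inner_self_eq_norm_sq, norm_xx hn, one_pow]

lemma dualTripleNorm_xs (hn : 1 ≤ n) : dualTripleNorm (xs n) = 1 :=
  le_antisymm (dualTripleNorm_le zero_le_one fun _ hy => inner_xx_le_one hn hy)
    (pairing_xs_xx hn ▸ pairing_le_dualTripleNorm _ (tripleNorm_xx hn).le)

lemma tripleNorm_e_zero_sub_xx_le (hn : 1 ≤ n) :
    tripleNorm (e 0 - xx n) ≤ max √(2 / n) (3 / 2 / n) :=
  norm_e_zero_sub_xx hn ▸ tripleNorm_le_max_norm (by positivity)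
    fun _ hm => abs_e_zero_sub_xx_apply_le hn (by omega)

lemma dualTripleNorm_e_zero_sub_xs_le (hn : 1 ≤ n) :
    dualTripleNorm (e 0 - xs n) ≤ √2 * √(2 / n) :=
  dualTripleNorm_le (by positivity) fun _ hy =>
    norm_e_zero_sub_xx hn ▸ inner_le_sqrt_two_mul_norm _ hy

end Xx

/-- For each `n ≥ 1`: `|||x(n)||| = ‖x(n)‖₂ = x*(n)(x(n)) = 1` and the dual norm of
`x*(n)` equals `1 = ‖x*(n)‖₂`; moreover `|||e₁ − x(n)||| → 0` and the dual norm of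
`e₁* − x*(n)` tends to `0`. -/
theorem xx_xs_norms_and_convergence :
    (∀ n : ℕ, 1 ≤ n →
      tripleNorm (xx n) = 1 ∧ ‖xx n‖ = 1 ∧ pairing (xs n) (xx n) = 1 ∧
      dualTripleNorm (xs n) = 1 ∧ ‖xs n‖ = 1) ∧
    Tendsto (fun n : ℕ => tripleNorm (e 0 - xx n)) atTop (nhds 0) ∧
    Tendsto (fun n : ℕ => dualTripleNorm (e 0 - xs n)) atTop (nhds 0) := by
  have hsqrt : Tendsto (fun n : ℕ => √(2 / n)) atTop (𝓝 0) :=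
    (Real.continuous_sqrt.tendsto' 0 0 Real.sqrt_zero).comp
      (tendsto_const_div_atTop_nhds_zero_nat 2)
  refine ⟨fun n hn => ⟨tripleNorm_xx hn, norm_xx hn, pairing_xs_xx hn, dualTripleNorm_xs hn,
      norm_xx hn⟩, ?_, ?_⟩
  · refine squeeze_zero' (.of_forall fun _ => tripleNorm_nonneg _)
      (eventually_atTop.2 ⟨1, fun n hn => tripleNorm_e_zero_sub_xx_le hn⟩) ?_
    simpa using hsqrt.max (tendsto_const_div_atTop_nhds_zero_nat (3 / 2))
  · refine squeeze_zero' (.of_forall fun _ => dualTripleNorm_nonneg _)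
      (eventually_atTop.2 ⟨1, fun n hn => dualTripleNorm_e_zero_sub_xs_le hn⟩) ?_
    simpa using hsqrt.const_mul √2

end
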